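/- In the Lie algebra sp_{1,2}(V,Ω) of Sp_{1,2}(V,Ω), the subspace u₁(H₊) of block-diagonal elements [[A₁,0],[0,A̅₁]] with A₁ skew-adjoint trace class admits the closed complement m = {[[0,A],[A̅,0]] : A ∈ L²(H₋,H₊), Aᵀ = A}: every element of sp_{1,2}(V,Ω) decomposes uniquely as a sum of an element of u₁(H₊) and an element of m, and both subspaces are closed in the (‖·‖₁ + ‖·‖₂)-norm. -/

import Mathlib

noncomputable section

open ContinuousLinearMap Complex
open scoped InnerProductSpace

namespace Siegel

variable (Hp Hm : Type) [NormedAddCommGroup Hp] [InnerProductSpace ℂ Hp] [CompleteSpace Hp]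
  [NormedAddCommGroup Hm] [InnerProductSpace ℂ Hm] [CompleteSpace Hm]

/-- The full Hilbert space `H = H₊ ⊕ H₋` (Hilbert space direct sum). -/
abbrev FullH := WithLp 2 (Hp × Hm)

variable {Hp Hm}

/-- The block operator `[[g, h], [k, l]]` on `H = H₊ ⊕ H₋`. -/
def blockOp (g : Hp →L[ℂ] Hp) (h : Hm →L[ℂ] Hp) (k : Hp →L[ℂ] Hm) (l : Hm →L[ℂ] Hm) :
    FullH Hp Hm →L[ℂ] FullH Hp Hm :=
  ((WithLp.prodContinuousLinearEquiv 2 ℂ Hp Hm).symm :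
      (Hp × Hm) →L[ℂ] FullH Hp Hm) ∘L
    ((g.coprod h).prod (k.coprod l)) ∘L
    ((WithLp.prodContinuousLinearEquiv 2 ℂ Hp Hm) : FullH Hp Hm →L[ℂ] (Hp × Hm))

/-- The complex structure `J`, acting by `i` on `H₊` and `-i` on `H₋`. -/
def Jop : FullH Hp Hm →L[ℂ] FullH Hp Hm :=
  blockOp (Complex.I • ContinuousLinearMap.id ℂ Hp) 0 0
    ((-Complex.I) • ContinuousLinearMap.id ℂ Hm)

section Conj

variable (C : Hp ≃ₛₗᵢ[starRingEnd ℂ] Hm)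

/-- Conjugate `h̄ : H₊ → H₋` of an operator `h : H₋ → H₊`, with respect to the
conjugation `C` exchanging `H₊` and `H₋`: `h̄ u = conj (h (conj u))`. -/
def cbar (h : Hm →L[ℂ] Hp) : Hp →L[ℂ] Hm :=
  LinearMap.mkContinuous
    { toFun := fun u => C (h (C u))
      map_add' := by intro u v; simp
      map_smul' := by intro a u; simp [map_smulₛₗ] }
    ‖h‖ (by
      intro u
      simp only [LinearMap.coe_mk, AddHom.coe_mk]
      calc ‖C (h (C u))‖ = ‖h (C u)‖ := C.norm_map _
        _ ≤ ‖h‖ * ‖C u‖ := h.le_opNorm _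
        _ = ‖h‖ * ‖u‖ := by rw [C.norm_map])

/-- Conjugate `ḡ : H₋ → H₋` of an operator `g : H₊ → H₊`. -/
def dbar (g : Hp →L[ℂ] Hp) : Hm →L[ℂ] Hm :=
  LinearMap.mkContinuous
    { toFun := fun v => C (g (C.symm v))
      map_add' := by intro u v; simp
      map_smul' := by intro a u; simp [map_smulₛₗ] }
    ‖g‖ (by
      intro u
      simp only [LinearMap.coe_mk, AddHom.coe_mk]
      calc ‖C (g (C.symm u))‖ = ‖g (C.symm u)‖ := C.norm_map _
        _ ≤ ‖g‖ * ‖C.symm u‖ := g.le_opNorm _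
        _ = ‖g‖ * ‖u‖ := by rw [C.symm.norm_map])

/-- The transpose `hᵀ := (h̄)* : H₋ → H₊` of `h : H₋ → H₊`. -/
def transp (h : Hm →L[ℂ] Hp) : Hm →L[ℂ] Hp :=
  ContinuousLinearMap.adjoint (cbar C h)

end Conj

/-- Hilbert–Schmidt property relative to a Hilbert basis of the domain. -/
def IsHS {ι E F : Type*} [NormedAddCommGroup E] [InnerProductSpace ℂ E]
    [NormedAddCommGroup F] [InnerProductSpace ℂ F]
    (b : HilbertBasis ι ℂ E) (T : E →L[ℂ] F) : Prop :=
  Summable fun i => ‖T (b i)‖ ^ 2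

/-- Squared Hilbert–Schmidt norm relative to a Hilbert basis. -/
def hsNorm {ι E F : Type*} [NormedAddCommGroup E] [InnerProductSpace ℂ E]
    [NormedAddCommGroup F] [InnerProductSpace ℂ F]
    (b : HilbertBasis ι ℂ E) (T : E →L[ℂ] F) : ℝ :=
  Real.sqrt (∑' i, ‖T (b i)‖ ^ 2)

/-- The absolute value `|T| = (T*T)^{1/2}` of an operator `T : E → F`,
defined by continuous functional calculus. -/
def absOp {E F : Type*} [NormedAddCommGroup E] [InnerProductSpace ℂ E] [CompleteSpace E]
    [NormedAddCommGroup F] [InnerProductSpace ℂ F] [CompleteSpace F]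
    (T : E →L[ℂ] F) : E →L[ℂ] E :=
  cfc Real.sqrt (ContinuousLinearMap.adjoint T ∘L T)

/-- Trace class property relative to a Hilbert basis: `Σ ⟨eᵢ, |T| eᵢ⟩ < ∞`. -/
def IsTraceClassAlong {ι E : Type*} [NormedAddCommGroup E] [InnerProductSpace ℂ E]
    [CompleteSpace E] (b : HilbertBasis ι ℂ E) (T : E →L[ℂ] E) : Prop :=
  Summable fun i => (inner ℂ (b i) (absOp T (b i)) : ℂ).re

/-- The trace norm `‖T‖₁ = Σ ⟨eᵢ, |T| eᵢ⟩` relative to a Hilbert basis. -/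
def traceNormAlong {ι E : Type*} [NormedAddCommGroup E] [InnerProductSpace ℂ E]
    [CompleteSpace E] (b : HilbertBasis ι ℂ E) (T : E →L[ℂ] E) : ℝ :=
  ∑' i, (inner ℂ (b i) (absOp T (b i)) : ℂ).re

/-- The trace of an operator relative to a Hilbert basis. -/
def traceAlong {ι E : Type*} [NormedAddCommGroup E] [InnerProductSpace ℂ E]
    (b : HilbertBasis ι ℂ E) (T : E →L[ℂ] E) : ℂ :=
  ∑' i, (inner ℂ (b i) (T (b i)) : ℂ)

/-- Positive definiteness of an operator: `⟨T u, u⟩ > 0` for all `u ≠ 0`. -/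
def IsPosDef {E : Type*} [NormedAddCommGroup E] [InnerProductSpace ℂ E]
    (T : E →L[ℂ] E) : Prop :=
  ∀ u : E, u ≠ 0 → 0 < (inner ℂ (T u) u : ℂ).re

/-- Membership in the restricted Siegel disc. -/
def InSiegel {ι : Type*} (C : Hp ≃ₛₗᵢ[starRingEnd ℂ] Hm) (bm : HilbertBasis ι ℂ Hm)
    (Z : Hm →L[ℂ] Hp) : Prop :=
  IsHS bm Z ∧ transp C Z = Z ∧
    IsPosDef (1 - ContinuousLinearMap.adjoint Z ∘L Z)

/-- Membership in the Lie algebra `gl_{1,2}(V)`: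
block operators `[[A₁, A₂], [A̅₂, A̅₁]]` with `A₁` trace class and `A₂` Hilbert–Schmidt. -/
def InGl12 {ιp ιm : Type*} (C : Hp ≃ₛₗᵢ[starRingEnd ℂ] Hm)
    (bp : HilbertBasis ιp ℂ Hp) (bm : HilbertBasis ιm ℂ Hm)
    (T : FullH Hp Hm →L[ℂ] FullH Hp Hm) : Prop :=
  ∃ (A₁ : Hp →L[ℂ] Hp) (A₂ : Hm →L[ℂ] Hp),
    IsTraceClassAlong bp A₁ ∧ IsHS bm A₂ ∧
      T = blockOp A₁ A₂ (cbar C A₂) (dbar C A₁)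

/-- Real inverse hyperbolic tangent. -/
def artanh (x : ℝ) : ℝ := Real.log ((1 + x) / (1 - x)) / 2

/-- The entire function `t ↦ cosh (√t)`, so that `cosh |A| = coshs (A*A)` via cfc. -/
def coshs (t : ℝ) : ℝ := Real.cosh (Real.sqrt t)

/-- The entire function `t ↦ sinh (√t) / √t`, so that `sinh|A|/|A| = sinhc (A*A)` via cfc. -/
def sinhc (t : ℝ) : ℝ := if t = 0 then 1 else Real.sinh (Real.sqrt t) / Real.sqrt t

/-- The entire function `t ↦ tanh (√t) / √t`. -/
def tanhc (t : ℝ) : ℝ := if t = 0 then 1 else Real.tanh (Real.sqrt t) / Real.sqrt t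

/-- The function `t ↦ artanh (√t) / √t`, so that `argtanh|Z|/|Z| = argFun (Z*Z)` via cfc. -/
def argFun (t : ℝ) : ℝ := if t = 0 then 1 else artanh (Real.sqrt t) / Real.sqrt t

/-- `A_Z := Z ⬝ argtanh|Z|/|Z|`, defined via continuous functional calculus. -/
def AZop (Z : Hm →L[ℂ] Hp) : Hm →L[ℂ] Hp :=
  Z ∘L cfc argFun (ContinuousLinearMap.adjoint Z ∘L Z)

/-- The momentum map `μ(M)(A) = -½ Tr((M*JM - J)A)` (trace relative to a Hilbert basis). -/
def muO {ιH : Type*} (bH : HilbertBasis ιH ℂ (FullH Hp Hm))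
    (M A : FullH Hp Hm →L[ℂ] FullH Hp Hm) : ℂ :=
  -(1 / 2 : ℂ) * traceAlong bH ((ContinuousLinearMap.adjoint M ∘L Jop ∘L M - Jop) ∘L A)

/-! The decomposition is a block computation: for `X = [[A₁, A₂], [A̅₂, A̅₁]]` the identity
`X* J + J X = 0` reads `i (A₁* + A₁) = 0` in the upper-left block and `i (A₂ - (A̅₂)*) = 0` in the
upper-right one, and a block operator determines its blocks.

For closedness, the trace norm and the Hilbert–Schmidt norm both dominate the operator norm, and
skew-adjointness and `Aᵀ = A` are closed conditions for the operator norm. The trace norm of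
`D n - C₁` only means something once `D n - C₁` is trace class, so the real work is that trace
class operators (along a fixed basis) are closed under addition. This rests on two approximate
polar decompositions: `|T| ≤ Re (G* T) + ε` for a contraction `G = T (|T| + ε)⁻¹`, and
`Σ_{i ∈ s} Re ⟪G eᵢ, A eᵢ⟫ ≤ ‖A‖₁` for every contraction `G`, by Cauchy–Schwarz after factoring
`A = Y M` with `Y* Y ≤ |A|` and `M* M = |A| + δ`. -/

open Filter Topology

lemma inv_sqrt_add_mul_mul_inv_le_one {x ε : ℝ} (hx : 0 ≤ x) (hε : 0 ≤ ε) :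
    (√x + ε)⁻¹ * x * (√x + ε)⁻¹ ≤ 1 := by
  obtain ⟨s, hs, rfl⟩ : ∃ s, 0 ≤ s ∧ x = s ^ 2 := ⟨√x, Real.sqrt_nonneg x, (Real.sq_sqrt hx).symm⟩
  rw [Real.sqrt_sq hs, show (s + ε)⁻¹ * s ^ 2 * (s + ε)⁻¹ = s ^ 2 / (s + ε) ^ 2 by
    rw [div_eq_mul_inv, ← inv_pow]; ring]
  exact div_le_one_of_le₀ (by nlinarith) (by positivity)

lemma sqrt_le_inv_sqrt_add_mul_add {x ε : ℝ} (hx : 0 ≤ x) (hε : 0 < ε) :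
    √x ≤ (√x + ε)⁻¹ * x + ε := by
  obtain ⟨s, hs, rfl⟩ : ∃ s, 0 ≤ s ∧ x = s ^ 2 := ⟨√x, Real.sqrt_nonneg x, (Real.sq_sqrt hx).symm⟩
  rw [Real.sqrt_sq hs, ← sub_le_iff_le_add, ← div_eq_inv_mul, le_div_iff₀ (by positivity)]
  nlinarith

lemma inv_sqrt_sqrt_add_mul_mul_inv_le_sqrt {x δ : ℝ} (hx : 0 ≤ x) (hδ : 0 < δ) :
    (√(√x + δ))⁻¹ * x * (√(√x + δ))⁻¹ ≤ √x := by
  obtain ⟨s, hs, rfl⟩ : ∃ s, 0 ≤ s ∧ x = s ^ 2 := ⟨√x, Real.sqrt_nonneg x, (Real.sq_sqrt hx).symm⟩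
  rw [Real.sqrt_sq hs, show ∀ r : ℝ, r⁻¹ * s ^ 2 * r⁻¹ = s ^ 2 / r ^ 2 by
      intro r; rw [div_eq_mul_inv, ← inv_pow]; ring,
    Real.sq_sqrt (by positivity), div_le_iff₀ (by positivity)]
  nlinarith

lemma le_of_forall_pos_le_of_continuous {x : ℝ} {f : ℝ → ℝ} (hf : Continuous f)
    (h : ∀ ε > 0, x ≤ f ε) : x ≤ f 0 :=
  ge_of_tendsto (hf.continuousWithinAt : ContinuousWithinAt f (Set.Ioi 0) 0)
    (eventually_nhdsWithin_of_forall h)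

lemma tendsto_zero_and_eq_zero_of_tendsto_add_const {α : Type*} {l : Filter α} [l.NeBot]
    {f : α → ℝ} {c : ℝ} (hf : ∀ n, 0 ≤ f n) (hc : 0 ≤ c)
    (h : Tendsto (fun n => f n + c) l (𝓝 0)) : Tendsto f l (𝓝 0) ∧ c = 0 :=
  ⟨squeeze_zero hf (fun _ => le_add_of_nonneg_right hc) h,
    tendsto_const_nhds_iff.mp <|
      squeeze_zero (fun _ => hc) (fun n => le_add_of_nonneg_left (hf n)) h⟩

section CStar
variable {A : Type*} [CStarAlgebra A]

lemma star_mul_cfc_mul (a : A) (f : ℝ → ℝ)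
    (hf : ContinuousOn f (spectrum ℝ (star a * a)) := by cfc_cont_tac) :
    star (a * cfc f (star a * a)) * a = cfc (fun x => f x * x) (star a * a) := by
  rw [star_mul, IsSelfAdjoint.cfc.star_eq, mul_assoc, cfc_mul f (fun x => x) (star a * a),
    cfc_id' ℝ (star a * a)]

lemma star_mul_cfc_mul_mul_cfc (a : A) (f : ℝ → ℝ)
    (hf : ContinuousOn f (spectrum ℝ (star a * a)) := by cfc_cont_tac) :
    star (a * cfc f (star a * a)) * (a * cfc f (star a * a)) =
      cfc (fun x => f x * x * f x) (star a * a) := by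
  rw [← mul_assoc, star_mul_cfc_mul a f hf,
    ← cfc_mul (fun x => f x * x) f (star a * a) (hf.mul continuousOn_id) hf]

variable [PartialOrder A] [StarOrderedRing A]

lemma abs_eq_cfc_sqrt (a : A) : CFC.abs a = cfc Real.sqrt (star a * a) := by
  rw [CFC.abs, CFC.sqrt_eq_real_sqrt _ (star_mul_self_nonneg a), cfcₙ_eq_cfc]

lemma exists_norm_le_one_abs_le (a : A) {ε : ℝ} (hε : 0 < ε) :
    ∃ g : A, ‖g‖ ≤ 1 ∧ CFC.abs a ≤ star g * a + algebraMap ℝ A ε := by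
  have hP := spectrum_nonneg_of_nonneg (𝕜 := ℝ) (star_mul_self_nonneg a)
  have hq : Continuous fun x : ℝ => (√x + ε)⁻¹ :=
    Continuous.inv₀ (by fun_prop) fun x => by positivity
  refine ⟨a * cfc (fun x => (√x + ε)⁻¹) (star a * a), ?_, ?_⟩
  · rw [← sq_le_one_iff₀ (norm_nonneg _), sq, ← CStarRing.norm_star_mul_self,
      CStarAlgebra.norm_le_one_iff_of_nonneg _ (star_mul_self_nonneg _),
      star_mul_cfc_mul_mul_cfc a _ hq.continuousOn]
    exact cfc_le_one _ _ fun x hx => inv_sqrt_add_mul_mul_inv_le_one (hP hx) hε.le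
  · rw [star_mul_cfc_mul a _ hq.continuousOn, abs_eq_cfc_sqrt,
      ← cfc_add_const ε (fun x => (√x + ε)⁻¹ * x) _ (hq.mul continuous_id).continuousOn]
    exact cfc_mono fun x hx => sqrt_le_inv_sqrt_add_mul_add (hP hx) hε

-- `m = (|a| + δ) ^ (1 / 2)` and `y = a m⁻¹`, written as functions of `star a * a`.
lemma exists_eq_mul_star_mul_self_le_abs (a : A) {δ : ℝ} (hδ : 0 < δ) :
    ∃ y m : A, a = y * m ∧ star y * y ≤ CFC.abs a ∧
      star m * m = CFC.abs a + algebraMap ℝ A δ := by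
  have hP := spectrum_nonneg_of_nonneg (𝕜 := ℝ) (star_mul_self_nonneg a)
  have hpos : ∀ x, 0 < √(√x + δ) := fun x => Real.sqrt_pos.mpr (by positivity)
  have hm : Continuous fun x : ℝ => √(√x + δ) := by fun_prop
  have hr : Continuous fun x : ℝ => (√(√x + δ))⁻¹ := hm.inv₀ fun x => (hpos x).ne'
  refine ⟨a * cfc (fun x => (√(√x + δ))⁻¹) (star a * a), cfc (fun x => √(√x + δ)) (star a * a),
    ?_, ?_, ?_⟩
  · rw [mul_assoc, ← cfc_mul _ _ _ hr.continuousOn hm.continuousOn,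
      cfc_congr (g := 1) fun x _ => inv_mul_cancel₀ (hpos x).ne', cfc_one ℝ _, mul_one]
  · rw [star_mul_cfc_mul_mul_cfc a _ hr.continuousOn, abs_eq_cfc_sqrt]
    exact cfc_mono fun x hx => inv_sqrt_sqrt_add_mul_mul_inv_le_sqrt (hP hx) hδ
  · rw [IsSelfAdjoint.cfc.star_eq, ← cfc_mul _ _ _ hm.continuousOn hm.continuousOn, abs_eq_cfc_sqrt,
      ← cfc_add_const δ Real.sqrt (star a * a)]
    exact cfc_congr fun x hx => Real.mul_self_sqrt (by have := hP hx; positivity)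

end CStar

section Operator
variable {E : Type*} [NormedAddCommGroup E] [InnerProductSpace ℂ E]

lemma re_inner_le_of_le {S T : E →L[ℂ] E} (h : S ≤ T) (u : E) :
    (⟪u, S u⟫_ℂ).re ≤ (⟪u, T u⟫_ℂ).re := by
  have := (ContinuousLinearMap.le_def S T).mp h |>.re_inner_nonneg_right u
  simpa [inner_sub_right] using this

lemma re_inner_algebraMap_apply (c : ℝ) (u : E) :
    (⟪u, algebraMap ℝ (E →L[ℂ] E) c u⟫_ℂ).re = c * ‖u‖ ^ 2 := by
  rw [Algebra.algebraMap_eq_smul_one, smul_apply, one_apply_eq_self,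
    RCLike.real_smul_eq_coe_smul (K := ℂ), inner_smul_right, inner_self_eq_norm_sq_to_K]
  norm_cast

variable [CompleteSpace E]

lemma norm_sq_eq_re_inner_star_mul (T : E →L[ℂ] E) (u : E) :
    ‖T u‖ ^ 2 = (⟪u, (star T * T) u⟫_ℂ).re := by
  rw [star_eq_adjoint, mul_apply_eq_comp, adjoint_inner_right, ← RCLike.re_to_complex,
    inner_self_eq_norm_sq]

lemma absOp_eq_abs (T : E →L[ℂ] E) : absOp T = CFC.abs T :=
  (abs_eq_cfc_sqrt T).symm

end Operator

section HilbertSchmidt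
variable {ι E F : Type*} [NormedAddCommGroup E] [InnerProductSpace ℂ E]
  [NormedAddCommGroup F] [InnerProductSpace ℂ F]

lemma hasSum_norm_inner_sq (b : HilbertBasis ι ℂ E) (x : E) :
    HasSum (fun i => ‖⟪b i, x⟫_ℂ‖ ^ 2) (‖x‖ ^ 2) := by
  have h := b.hasSum_inner_mul_inner x x
  have hterm : ∀ i, ⟪x, b i⟫_ℂ * ⟪b i, x⟫_ℂ = ((‖⟪b i, x⟫_ℂ‖ ^ 2 : ℝ) : ℂ) := fun i => by
    rw [← inner_conj_symm, RCLike.conj_mul]; norm_cast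
  rw [funext hterm, inner_self_eq_norm_sq_to_K, ← RCLike.ofReal_pow] at h
  exact (RCLike.hasSum_ofReal ℂ).mp h

lemma hasSum_inner_smul_apply (b : HilbertBasis ι ℂ E) (X : E →L[ℂ] F) (u : E) :
    HasSum (fun i => ⟪b i, u⟫_ℂ • X (b i)) (X u) := by
  simpa [b.repr_apply_apply] using (b.hasSum_repr u).mapL X

lemma norm_apply_le_hsNorm (b : HilbertBasis ι ℂ E) {X : E →L[ℂ] F} (hX : IsHS b X) (u : E) :
    ‖X u‖ ≤ hsNorm b X * ‖u‖ := by
  obtain ⟨c, -, hc, hsum⟩ := Real.inner_le_Lp_mul_Lq_hasSum_of_nonneg .two_two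
    (Real.sqrt_nonneg (∑' i, ‖X (b i)‖ ^ 2)) (norm_nonneg u) (fun i => norm_nonneg (X (b i)))
    (fun i => norm_nonneg ⟪b i, u⟫_ℂ)
    (by simpa [Real.rpow_two, Real.sq_sqrt (tsum_nonneg fun i => sq_nonneg ‖X (b i)‖)]
      using hX.hasSum)
    (by simpa [Real.rpow_two] using hasSum_norm_inner_sq b u)
  refine (hasSum_inner_smul_apply b X u).norm_le_of_bounded hsum (fun i => ?_) |>.trans hc
  rw [norm_smul, mul_comm]

lemma hsNorm_nonneg (b : HilbertBasis ι ℂ E) (X : E →L[ℂ] F) : 0 ≤ hsNorm b X :=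
  Real.sqrt_nonneg _

lemma opNorm_le_hsNorm (b : HilbertBasis ι ℂ E) {X : E →L[ℂ] F} (hX : IsHS b X) :
    ‖X‖ ≤ hsNorm b X :=
  opNorm_le_bound _ (hsNorm_nonneg b X) (norm_apply_le_hsNorm b hX)

lemma eq_zero_of_hsNorm_eq_zero (b : HilbertBasis ι ℂ E) {X : E →L[ℂ] F} (hX : IsHS b X)
    (h : hsNorm b X = 0) : X = 0 :=
  norm_le_zero_iff.mp (h ▸ opNorm_le_hsNorm b hX)

lemma tendsto_of_tendsto_hsNorm {α : Type*} {l : Filter α} (b : HilbertBasis ι ℂ E)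
    {X : α → E →L[ℂ] F} {X₀ : E →L[ℂ] F} (hX : ∀ n, IsHS b (X n - X₀))
    (h : Tendsto (fun n => hsNorm b (X n - X₀)) l (𝓝 0)) : Tendsto X l (𝓝 X₀) :=
  tendsto_iff_norm_sub_tendsto_zero.mpr <|
    squeeze_zero (fun _ => norm_nonneg _) (fun n => opNorm_le_hsNorm b (hX n)) h

lemma IsHS.sub {b : HilbertBasis ι ℂ E} {X Y : E →L[ℂ] F} (hX : IsHS b X) (hY : IsHS b Y) :
    IsHS b (X - Y) := by
  refine .of_nonneg_of_le (fun i => by positivity) (fun i => ?_) ((hX.add hY).mul_left 2)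
  have := norm_sub_le (X (b i)) (Y (b i))
  simp only [sub_apply]
  nlinarith [norm_nonneg (X (b i) - Y (b i)), sq_nonneg (‖X (b i)‖ - ‖Y (b i)‖)]

lemma enorm_sq_eq_tsum (b : HilbertBasis ι ℂ E) (x : E) :
    ‖x‖ₑ ^ 2 = ∑' i, ‖⟪b i, x⟫_ℂ‖ₑ ^ 2 := by
  have h := hasSum_norm_inner_sq b x
  simp only [← ofReal_norm, ← ENNReal.ofReal_pow (norm_nonneg _)]
  rw [← h.tsum_eq, ENNReal.ofReal_tsum_of_nonneg (fun i => by positivity) h.summable]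

end HilbertSchmidt

section HilbertSchmidtAdjoint
variable {ι κ E F : Type*} [NormedAddCommGroup E] [InnerProductSpace ℂ E] [CompleteSpace E]
  [NormedAddCommGroup F] [InnerProductSpace ℂ F] [CompleteSpace F]

lemma tsum_enorm_sq_adjoint (b : HilbertBasis ι ℂ E) (c : HilbertBasis κ ℂ F) (X : E →L[ℂ] F) :
    ∑' j, ‖adjoint X (c j)‖ₑ ^ 2 = ∑' i, ‖X (b i)‖ₑ ^ 2 := by
  simp only [enorm_sq_eq_tsum b, enorm_sq_eq_tsum c (X _)]
  rw [ENNReal.tsum_comm]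
  refine tsum_congr fun i => tsum_congr fun j => ?_
  rw [adjoint_inner_right, ← inner_conj_symm, RCLike.enorm_conj]

lemma hasSum_norm_sq_adjoint (b : HilbertBasis ι ℂ E) (c : HilbertBasis κ ℂ F) {X : E →L[ℂ] F}
    (hX : IsHS b X) : HasSum (fun j => ‖adjoint X (c j)‖ ^ 2) (∑' i, ‖X (b i)‖ ^ 2) := by
  have hfin : ∑' j, ‖adjoint X (c j)‖ₑ ^ 2 ≠ ⊤ := by
    rw [tsum_enorm_sq_adjoint b c]
    simp only [← ofReal_norm, ← ENNReal.ofReal_pow (norm_nonneg _),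
      ← ENNReal.ofReal_tsum_of_nonneg (fun i => sq_nonneg ‖X (b i)‖) hX]
    exact ENNReal.ofReal_ne_top
  convert ENNReal.hasSum_toReal hfin using 1
  · simp
  · rw [← ENNReal.tsum_toReal_eq fun _ => by finiteness, tsum_enorm_sq_adjoint b c,
      ENNReal.tsum_toReal_eq fun _ => by finiteness]
    simp

end HilbertSchmidtAdjoint

section TraceClass
variable {ι E : Type*} [NormedAddCommGroup E] [InnerProductSpace ℂ E] [CompleteSpace E]

lemma re_inner_absOp_eq_norm_sq (T : E →L[ℂ] E) (u : E) :
    (⟪u, absOp T u⟫_ℂ).re = ‖CFC.sqrt (absOp T) u‖ ^ 2 := by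
  rw [norm_sq_eq_re_inner_star_mul, (CFC.sqrt_nonneg _).isSelfAdjoint.star_eq,
    CFC.sqrt_mul_sqrt_self _ (absOp_eq_abs T ▸ CFC.abs_nonneg T)]

lemma isTraceClassAlong_iff_isHS (b : HilbertBasis ι ℂ E) (T : E →L[ℂ] E) :
    IsTraceClassAlong b T ↔ IsHS b (CFC.sqrt (absOp T)) := by
  simp only [IsTraceClassAlong, IsHS, re_inner_absOp_eq_norm_sq]

lemma traceNormAlong_eq_hsNorm_sq (b : HilbertBasis ι ℂ E) (T : E →L[ℂ] E) :
    traceNormAlong b T = hsNorm b (CFC.sqrt (absOp T)) ^ 2 := by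
  rw [hsNorm, Real.sq_sqrt (tsum_nonneg fun i => sq_nonneg _)]
  simp only [traceNormAlong, re_inner_absOp_eq_norm_sq]

lemma traceNormAlong_nonneg (b : HilbertBasis ι ℂ E) (T : E →L[ℂ] E) :
    0 ≤ traceNormAlong b T := by
  rw [traceNormAlong_eq_hsNorm_sq]
  positivity

lemma norm_absOp_apply (T : E →L[ℂ] E) (u : E) : ‖absOp T u‖ = ‖T u‖ := by
  refine (pow_left_inj₀ (norm_nonneg _) (norm_nonneg _) two_ne_zero).mp ?_
  rw [norm_sq_eq_re_inner_star_mul, norm_sq_eq_re_inner_star_mul, absOp_eq_abs,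
    (CFC.abs_nonneg T).isSelfAdjoint.star_eq, CFC.abs_mul_abs]

lemma norm_apply_le_traceNormAlong (b : HilbertBasis ι ℂ E) {T : E →L[ℂ] E}
    (hT : IsTraceClassAlong b T) (u : E) : ‖T u‖ ≤ traceNormAlong b T * ‖u‖ := by
  set N := CFC.sqrt (absOp T)
  have hN := (isTraceClassAlong_iff_isHS b T).mp hT
  calc ‖T u‖ = ‖N (N u)‖ := by
        rw [← norm_absOp_apply, ← mul_apply_eq_comp,
          CFC.sqrt_mul_sqrt_self _ (absOp_eq_abs T ▸ CFC.abs_nonneg T)]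
    _ ≤ hsNorm b N * (hsNorm b N * ‖u‖) :=
        (norm_apply_le_hsNorm b hN _).trans <|
          mul_le_mul_of_nonneg_left (norm_apply_le_hsNorm b hN u) (hsNorm_nonneg b N)
    _ = traceNormAlong b T * ‖u‖ := by rw [traceNormAlong_eq_hsNorm_sq]; ring

lemma opNorm_le_traceNormAlong (b : HilbertBasis ι ℂ E) {T : E →L[ℂ] E}
    (hT : IsTraceClassAlong b T) : ‖T‖ ≤ traceNormAlong b T :=
  opNorm_le_bound _ (traceNormAlong_nonneg b T) (norm_apply_le_traceNormAlong b hT)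

lemma eq_zero_of_traceNormAlong_eq_zero (b : HilbertBasis ι ℂ E) {T : E →L[ℂ] E}
    (hT : IsTraceClassAlong b T) (h : traceNormAlong b T = 0) : T = 0 :=
  norm_le_zero_iff.mp (h ▸ opNorm_le_traceNormAlong b hT)

lemma tendsto_of_tendsto_traceNormAlong {α : Type*} {l : Filter α} (b : HilbertBasis ι ℂ E)
    {T : α → E →L[ℂ] E} {T₀ : E →L[ℂ] E} (hT : ∀ n, IsTraceClassAlong b (T n - T₀))
    (h : Tendsto (fun n => traceNormAlong b (T n - T₀)) l (𝓝 0)) : Tendsto T l (𝓝 T₀) :=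
  tendsto_iff_norm_sub_tendsto_zero.mpr <|
    squeeze_zero (fun _ => norm_nonneg _) (fun n => opNorm_le_traceNormAlong b (hT n)) h

lemma IsTraceClassAlong.neg {b : HilbertBasis ι ℂ E} {T : E →L[ℂ] E}
    (hT : IsTraceClassAlong b T) : IsTraceClassAlong b (-T) := by
  simpa [IsTraceClassAlong, absOp_eq_abs] using hT

end TraceClass

section TraceClassAdd
variable {ι E : Type*} [NormedAddCommGroup E] [InnerProductSpace ℂ E] [CompleteSpace E]

lemma sum_norm_sq_star_apply_le_traceNormAlong (b : HilbertBasis ι ℂ E) {A G Y : E →L[ℂ] E}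
    (hA : IsTraceClassAlong b A) (hG : ‖G‖ ≤ 1) (hY : star Y * Y ≤ absOp A) (s : Finset ι) :
    ∑ i ∈ s, ‖star Y (G (b i))‖ ^ 2 ≤ traceNormAlong b A := by
  have hbound : ∀ i, ‖(star G * Y) (b i)‖ ^ 2 ≤ (⟪b i, absOp A (b i)⟫_ℂ).re := fun i => by
    calc ‖(star G * Y) (b i)‖ ^ 2 ≤ ‖Y (b i)‖ ^ 2 := by
          gcongr
          exact (le_opNorm (star G) _).trans
            (mul_le_of_le_one_left (norm_nonneg _) ((norm_star G).trans_le hG))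
      _ ≤ _ := (norm_sq_eq_re_inner_star_mul Y (b i)).trans_le (re_inner_le_of_le hY _)
  have hV : IsHS b (star G * Y) := Summable.of_nonneg_of_le (fun i => sq_nonneg _) hbound hA
  calc ∑ i ∈ s, ‖star Y (G (b i))‖ ^ 2 = ∑ i ∈ s, ‖adjoint (star G * Y) (b i)‖ ^ 2 := by
        rw [← star_eq_adjoint, star_mul, star_star]; rfl
    _ ≤ ∑' i, ‖(star G * Y) (b i)‖ ^ 2 :=
        sum_le_hasSum s (fun i _ => sq_nonneg _) (hasSum_norm_sq_adjoint b b hV)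
    _ ≤ traceNormAlong b A := Summable.tsum_le_tsum hbound hV hA

lemma sum_re_inner_le_traceNormAlong (b : HilbertBasis ι ℂ E) {A G : E →L[ℂ] E}
    (hA : IsTraceClassAlong b A) (hG : ‖G‖ ≤ 1) (s : Finset ι) :
    ∑ i ∈ s, (⟪G (b i), A (b i)⟫_ℂ).re ≤ traceNormAlong b A := by
  set t := traceNormAlong b A
  have ht : 0 ≤ t := traceNormAlong_nonneg b A
  suffices h : ∀ δ > 0, ∑ i ∈ s, (⟪G (b i), A (b i)⟫_ℂ).re ≤ √t * √(t + δ * s.card) by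
    simpa [Real.mul_self_sqrt ht] using le_of_forall_pos_le_of_continuous (by fun_prop) h
  intro δ hδ
  obtain ⟨Y, M, hYM, hY, hM⟩ := exists_eq_mul_star_mul_self_le_abs A hδ
  rw [← absOp_eq_abs] at hY hM
  have hYG := sum_norm_sq_star_apply_le_traceNormAlong b hA hG hY s
  have hMs : ∑ i ∈ s, ‖M (b i)‖ ^ 2 ≤ t + δ * s.card := by
    have hterm : ∀ i, ‖M (b i)‖ ^ 2 = (⟪b i, absOp A (b i)⟫_ℂ).re + δ := fun i => by
      rw [norm_sq_eq_re_inner_star_mul, hM, add_apply, inner_add_right, Complex.add_re,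
        re_inner_algebraMap_apply, b.orthonormal.1 i, one_pow, mul_one]
    simp only [hterm, Finset.sum_add_distrib, Finset.sum_const, nsmul_eq_mul]
    have : ∑ i ∈ s, (⟪b i, absOp A (b i)⟫_ℂ).re ≤ t :=
      hA.sum_le_tsum s fun i _ => (re_inner_absOp_eq_norm_sq A (b i)).symm ▸ sq_nonneg _
    linarith
  calc ∑ i ∈ s, (⟪G (b i), A (b i)⟫_ℂ).re ≤ ∑ i ∈ s, ‖star Y (G (b i))‖ * ‖M (b i)‖ := by
        gcongr with i
        rw [hYM, mul_apply_eq_comp, ← adjoint_inner_left, ← star_eq_adjoint]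
        exact (re_le_norm _).trans (norm_inner_le_norm _ _)
    _ ≤ √(∑ i ∈ s, ‖star Y (G (b i))‖ ^ 2) * √(∑ i ∈ s, ‖M (b i)‖ ^ 2) :=
        Real.sum_mul_le_sqrt_mul_sqrt s _ _
    _ ≤ √t * √(t + δ * s.card) := by gcongr

lemma IsTraceClassAlong.add {b : HilbertBasis ι ℂ E} {A B : E →L[ℂ] E}
    (hA : IsTraceClassAlong b A) (hB : IsTraceClassAlong b B) : IsTraceClassAlong b (A + B) := by
  refine summable_of_sum_le (c := traceNormAlong b A + traceNormAlong b B)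
    (fun i => (re_inner_absOp_eq_norm_sq _ (b i)).symm ▸ sq_nonneg _) fun s => ?_
  suffices h : ∀ ε > 0, ∑ i ∈ s, (⟪b i, absOp (A + B) (b i)⟫_ℂ).re ≤
      traceNormAlong b A + traceNormAlong b B + ε * s.card by
    simpa using le_of_forall_pos_le_of_continuous (by fun_prop) h
  intro ε hε
  obtain ⟨G, hG, hle⟩ := exists_norm_le_one_abs_le (A + B) hε
  rw [← absOp_eq_abs] at hle
  have hterm : ∀ i, (⟪b i, absOp (A + B) (b i)⟫_ℂ).re ≤
      (⟪G (b i), A (b i)⟫_ℂ).re + (⟪G (b i), B (b i)⟫_ℂ).re + ε := fun i => by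
    have := re_inner_le_of_le hle (b i)
    rwa [add_apply, inner_add_right, Complex.add_re, re_inner_algebraMap_apply,
      b.orthonormal.1 i, one_pow, mul_one, star_eq_adjoint, mul_apply_eq_comp,
      adjoint_inner_right, add_apply, inner_add_right, Complex.add_re] at this
  calc ∑ i ∈ s, (⟪b i, absOp (A + B) (b i)⟫_ℂ).re
      ≤ ∑ i ∈ s, ((⟪G (b i), A (b i)⟫_ℂ).re + (⟪G (b i), B (b i)⟫_ℂ).re + ε) :=
        Finset.sum_le_sum fun i _ => hterm i
    _ ≤ traceNormAlong b A + traceNormAlong b B + ε * s.card := by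
        simp only [Finset.sum_add_distrib, Finset.sum_const, nsmul_eq_mul]
        linarith [sum_re_inner_le_traceNormAlong b hA hG s,
          sum_re_inner_le_traceNormAlong b hB hG s]

lemma IsTraceClassAlong.sub {b : HilbertBasis ι ℂ E} {A B : E →L[ℂ] E}
    (hA : IsTraceClassAlong b A) (hB : IsTraceClassAlong b B) : IsTraceClassAlong b (A - B) :=
  sub_eq_add_neg A B ▸ hA.add hB.neg

end TraceClassAdd

section Conj
variable {V W : Type} [NormedAddCommGroup V] [InnerProductSpace ℂ V]
  [NormedAddCommGroup W] [InnerProductSpace ℂ W] (C : V ≃ₛₗᵢ[starRingEnd ℂ] W)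

lemma cbar_sub (h h' : W →L[ℂ] V) : cbar C (h - h') = cbar C h - cbar C h' := by
  ext u
  simp [cbar]

lemma norm_cbar_le (h : W →L[ℂ] V) : ‖cbar C h‖ ≤ ‖h‖ :=
  LinearMap.mkContinuous_norm_le _ (norm_nonneg h) _

lemma lipschitzWith_cbar : LipschitzWith 1 (cbar C) :=
  LipschitzWith.of_dist_le_mul fun h h' => by
    simpa [dist_eq_norm, ← cbar_sub] using norm_cbar_le C (h - h')

variable [CompleteSpace V] [CompleteSpace W]

lemma isClosed_setOf_transp_eq : IsClosed {h : W →L[ℂ] V | transp C h = h} :=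
  isClosed_eq ((LinearIsometryEquiv.continuous _).comp (lipschitzWith_cbar C).continuous)
    continuous_id

end Conj

section Block
variable {V W : Type} [NormedAddCommGroup V] [InnerProductSpace ℂ V]
  [NormedAddCommGroup W] [InnerProductSpace ℂ W]

@[simp]
lemma blockOp_apply (g : V →L[ℂ] V) (h : W →L[ℂ] V) (k : V →L[ℂ] W) (l : W →L[ℂ] W)
    (a : V) (c : W) :
    blockOp g h k l (WithLp.toLp 2 (a, c)) = WithLp.toLp 2 (g a + h c, k a + l c) := rfl

lemma blockOp_ext {S T : FullH V W →L[ℂ] FullH V W}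
    (h : ∀ a c, S (WithLp.toLp 2 (a, c)) = T (WithLp.toLp 2 (a, c))) : S = T := by
  ext ⟨a, c⟩
  exact h a c

lemma blockOp_zero : blockOp (0 : V →L[ℂ] V) (0 : W →L[ℂ] V) 0 0 = 0 :=
  blockOp_ext fun a c => by simp

lemma blockOp_add (g g' : V →L[ℂ] V) (h h' : W →L[ℂ] V) (k k' : V →L[ℂ] W)
    (l l' : W →L[ℂ] W) :
    blockOp g h k l + blockOp g' h' k' l' = blockOp (g + g') (h + h') (k + k') (l + l') :=
  blockOp_ext fun a c => by
    simp only [add_apply, blockOp_apply, ← WithLp.toLp_add, Prod.mk_add_mk]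
    congr 2 <;> abel

lemma blockOp_comp_blockOp (g g' : V →L[ℂ] V) (h h' : W →L[ℂ] V) (k k' : V →L[ℂ] W)
    (l l' : W →L[ℂ] W) :
    blockOp g h k l ∘L blockOp g' h' k' l' =
      blockOp (g ∘L g' + h ∘L k') (g ∘L h' + h ∘L l') (k ∘L g' + l ∘L k') (k ∘L h' + l ∘L l') :=
  blockOp_ext fun a c => by
    simp only [comp_apply, blockOp_apply, map_add, add_apply, WithLp.toLp.injEq, Prod.mk.injEq]
    constructor <;> abel

lemma blockOp_injective {g g' : V →L[ℂ] V} {h h' : W →L[ℂ] V} {k k' : V →L[ℂ] W}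
    {l l' : W →L[ℂ] W} (e : blockOp g h k l = blockOp g' h' k' l') :
    g = g' ∧ h = h' ∧ k = k' ∧ l = l' := by
  have e₁ := fun a => congr($e (WithLp.toLp 2 (a, 0)))
  have e₂ := fun c => congr($e (WithLp.toLp 2 (0, c)))
  simp only [blockOp_apply, map_zero, add_zero, zero_add, WithLp.toLp.injEq, Prod.mk.injEq] at e₁ e₂
  exact ⟨ext fun a => (e₁ a).1, ext fun c => (e₂ c).1, ext fun a => (e₁ a).2,
    ext fun c => (e₂ c).2⟩

variable [CompleteSpace V] [CompleteSpace W]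

lemma adjoint_blockOp (g : V →L[ℂ] V) (h : W →L[ℂ] V) (k : V →L[ℂ] W) (l : W →L[ℂ] W) :
    adjoint (blockOp g h k l) = blockOp (adjoint g) (adjoint k) (adjoint h) (adjoint l) := by
  refine ((eq_adjoint_iff _ _).mpr ?_).symm
  rintro ⟨a, c⟩ ⟨a', c'⟩
  simp only [blockOp_apply, WithLp.prod_inner_apply, inner_add_left, inner_add_right,
    adjoint_inner_left]
  ring

lemma adjoint_eq_neg_and_transp_eq_of_mem_sp (C : V ≃ₛₗᵢ[starRingEnd ℂ] W)
    {A₁ : V →L[ℂ] V} {A₂ : W →L[ℂ] V}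
    (h : adjoint (blockOp A₁ A₂ (cbar C A₂) (dbar C A₁)) ∘L Jop +
      Jop ∘L blockOp A₁ A₂ (cbar C A₂) (dbar C A₁) = 0) :
    adjoint A₁ = -A₁ ∧ transp C A₂ = A₂ := by
  rw [Jop, adjoint_blockOp, blockOp_comp_blockOp, blockOp_comp_blockOp, blockOp_add,
    ← blockOp_zero] at h
  obtain ⟨h₁, h₂, -, -⟩ := blockOp_injective h
  simp only [comp_smul, comp_id, smul_comp, id_comp, comp_zero, zero_comp, add_zero, zero_add,
    ← smul_add, smul_eq_zero, I_ne_zero, false_or] at h₁ h₂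
  rw [neg_smul, neg_add_eq_sub, ← smul_sub, smul_eq_zero, or_iff_right I_ne_zero] at h₂
  exact ⟨eq_neg_of_add_eq_zero_left h₁, (sub_eq_zero.mp h₂).symm⟩

end Block

/-- In `sp₁,₂(V,Ω)`, the diagonal subalgebra `u₁(H₊)` admits the closed
complement `m` of symmetric off-diagonal elements: unique decomposition, and both subspaces
are closed for the `‖·‖₁ + ‖·‖₂` norm. -/
theorem sp12_decomposition {ιp ιm : Type*} (C : Hp ≃ₛₗᵢ[starRingEnd ℂ] Hm)
    (bp : HilbertBasis ιp ℂ Hp) (bm : HilbertBasis ιm ℂ Hm)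
    (X : FullH Hp Hm →L[ℂ] FullH Hp Hm)
    (A₁ : Hp →L[ℂ] Hp) (A₂ : Hm →L[ℂ] Hp)
    (hX : X = blockOp A₁ A₂ (cbar C A₂) (dbar C A₁))
    (hTC : IsTraceClassAlong bp A₁) (hHS : IsHS bm A₂)
    (hsp : ContinuousLinearMap.adjoint X ∘L Jop + Jop ∘L X = 0) :
    (∃! p : (Hp →L[ℂ] Hp) × (Hm →L[ℂ] Hp),
      (ContinuousLinearMap.adjoint p.1 = -p.1 ∧ IsTraceClassAlong bp p.1) ∧
      (transp C p.2 = p.2 ∧ IsHS bm p.2) ∧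
      X = blockOp p.1 0 0 (dbar C p.1) + blockOp 0 p.2 (cbar C p.2) 0) ∧
    -- `u₁(H₊)` is closed in the `‖·‖₁ + ‖·‖₂` norm
    (∀ (D : ℕ → Hp →L[ℂ] Hp) (C₁ : Hp →L[ℂ] Hp) (C₂ : Hm →L[ℂ] Hp),
      (∀ n, ContinuousLinearMap.adjoint (D n) = -(D n) ∧ IsTraceClassAlong bp (D n)) →
      IsTraceClassAlong bp C₁ → IsHS bm C₂ →
      Filter.Tendsto (fun n => traceNormAlong bp (D n - C₁) + hsNorm bm C₂)
        Filter.atTop (nhds 0) →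
      (ContinuousLinearMap.adjoint C₁ = -C₁ ∧ C₂ = 0)) ∧
    -- `m` is closed in the `‖·‖₁ + ‖·‖₂` norm
    (∀ (E : ℕ → Hm →L[ℂ] Hp) (C₁ : Hp →L[ℂ] Hp) (C₂ : Hm →L[ℂ] Hp),
      (∀ n, transp C (E n) = E n ∧ IsHS bm (E n)) →
      IsTraceClassAlong bp C₁ → IsHS bm C₂ →
      Filter.Tendsto (fun n => traceNormAlong bp C₁ + hsNorm bm (E n - C₂))
        Filter.atTop (nhds 0) →
      (transp C C₂ = C₂ ∧ C₁ = 0)) := by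
  obtain ⟨hA₁, hA₂⟩ := adjoint_eq_neg_and_transp_eq_of_mem_sp C (hX ▸ hsp)
  have hsplit : X = blockOp A₁ 0 0 (dbar C A₁) + blockOp 0 A₂ (cbar C A₂) 0 := by
    rw [hX, blockOp_add]
    simp only [add_zero, zero_add]
  refine ⟨⟨(A₁, A₂), ⟨⟨hA₁, hTC⟩, ⟨hA₂, hHS⟩, hsplit⟩, ?_⟩, ?_, ?_⟩
  · rintro ⟨B₁, B₂⟩ ⟨-, -, hB⟩
    rw [hsplit, blockOp_add, blockOp_add] at hB
    obtain ⟨h₁, h₂, -, -⟩ := blockOp_injective hB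
    simp only [add_zero, zero_add] at h₁ h₂
    exact Prod.ext h₁.symm h₂.symm
  · intro D C₁ C₂ hD hC₁ hC₂ hlim
    obtain ⟨hDlim, hC₂0⟩ := tendsto_zero_and_eq_zero_of_tendsto_add_const
      (fun _ => traceNormAlong_nonneg bp _) (hsNorm_nonneg bm C₂) hlim
    have hDC : Tendsto D atTop (𝓝 C₁) :=
      tendsto_of_tendsto_traceNormAlong bp (fun n => (hD n).2.sub hC₁) hDlim
    exact ⟨(isClosed_eq adjoint.continuous continuous_neg).mem_of_tendsto hDC
      (Eventually.of_forall fun n => (hD n).1), eq_zero_of_hsNorm_eq_zero bm hC₂ hC₂0⟩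
  · intro E C₁ C₂ hE hC₁ hC₂ hlim
    obtain ⟨hElim, hC₁0⟩ := tendsto_zero_and_eq_zero_of_tendsto_add_const
      (fun _ => hsNorm_nonneg bm _) (traceNormAlong_nonneg bp C₁)
      (by simpa only [add_comm] using hlim)
    have hEC : Tendsto E atTop (𝓝 C₂) :=
      tendsto_of_tendsto_hsNorm bm (fun n => (hE n).2.sub hC₂) hElim
    exact ⟨(isClosed_setOf_transp_eq C).mem_of_tendsto hEC (Eventually.of_forall fun n => (hE n).1),
      eq_zero_of_traceNormAlong_eq_zero bp hC₁ hC₁0⟩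

end Siegel
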